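/- Let ν = (ν₁, ν₂, ν₃, ν₄) ∈ ℝ⁴, let d = (1, −1, −1, 1) ∈ ℝ⁴, let λ̄ > 0 and γ̄ ≥ 0, and set ν̈ = ν₁ − ν₂ − ν₃ + ν₄. Define η̂₀ ∈ ℝ⁴ by: η̂₀ = (ν₁ − ν̈/4, ν₂ + ν̈/4, ν₃ + ν̈/4, ν₄ − ν̈/4) if |ν̈| ≤ 4λ̄; η̂₀ = (ν₁ − λ̄, ν₂ + λ̄, ν₃ + λ̄, ν₄ − λ̄) if ν̈ > 4λ̄; and η̂₀ = (ν₁ + λ̄, ν₂ − λ̄, ν₃ − λ̄, ν₄ + λ̄) if ν̈ < −4λ̄. Then η̂ = max(1 − γ̄/‖η̂₀‖₂, 0) · η̂₀ (interpreted as 0 when η̂₀ = 0) is the unique global minimizer over ℝ⁴ of f(η) = (1/2)‖η − ν‖₂² + λ̄|⟨d, η⟩| + γ̄‖η‖₂. In particular, taking γ̄ = 0, η̂₀ is the unique global minimizer of η ↦ (1/2)‖η − ν‖₂² + λ̄|⟨d, η⟩|. -/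

import Mathlib

/-!
Each objective is `F = ½‖· - ν‖² + φ`. If `ν - x` is a subgradient of `φ` at `x`, expanding the
square gives `F x + ½‖y - x‖² ≤ F y`, so `x` is the unique minimizer. For `φ = λ|⟪d, ·⟫|` the
point `η̂₀` is the soft-thresholding of `ν` along `d`, with residual `ν - η̂₀ = λ s d` for some
`s ∈ ∂|·|(⟪d, η̂₀⟫)`. Since `|⟪d, ·⟫|` is positively homogeneous, `λ s d` stays a subgradient at
`η̂ = c η̂₀` for every `c ≥ 0`, and the residual `(1 - c) η̂₀` of group soft-thresholding is a
subgradient of `γ‖·‖` at `η̂`; the two add up to `ν - η̂`.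
-/

/-- Euclidean (ℓ₂) norm of a finitely indexed real vector. -/
noncomputable def l2norm {ι : Type*} [Fintype ι] (v : ι → ℝ) : ℝ :=
  Real.sqrt (∑ i, (v i) ^ 2)

open scoped RealInnerProductSpace

def IsUniqueMinimizer {α : Type*} (F : α → ℝ) (x : α) : Prop :=
  (∀ y, F x ≤ F y) ∧ ∀ y, (∀ y', F y ≤ F y') → y = x

theorem IsUniqueMinimizer.comp_equiv {α β : Type*} {F : β → ℝ} {x : α} (e : α ≃ β)
    (h : IsUniqueMinimizer F (e x)) : IsUniqueMinimizer (F ∘ e) x :=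
  ⟨fun y => h.1 (e y), fun y hy => e.injective <| h.2 (e y) fun y' => by
    simpa using hy (e.symm y')⟩

section InnerProductSpace

variable {E : Type*} [NormedAddCommGroup E] [InnerProductSpace ℝ E]

def HasSubgradientAt (φ : E → ℝ) (q x : E) : Prop :=
  ∀ y, φ x + ⟪q, y - x⟫ ≤ φ y

theorem HasSubgradientAt.add {φ ψ : E → ℝ} {q r x : E} (hφ : HasSubgradientAt φ q x)
    (hψ : HasSubgradientAt ψ r x) : HasSubgradientAt (fun y => φ y + ψ y) (q + r) x := by
  intro y
  have := add_le_add (hφ y) (hψ y)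
  rw [inner_add_left]
  linarith

theorem hasSubgradientAt_of_inner_le {φ : E → ℝ} {q x : E} (hle : ∀ y, ⟪q, y⟫ ≤ φ y)
    (heq : ⟪q, x⟫ = φ x) : HasSubgradientAt φ q x := by
  intro y
  rw [inner_sub_right, heq]
  linarith [hle y]

theorem hasSubgradientAt_const_mul_abs_inner {lam s : ℝ} {d x : E} (hlam : 0 ≤ lam)
    (hs : |s| ≤ 1) (hx : s * ⟪d, x⟫ = |⟪d, x⟫|) :
    HasSubgradientAt (fun y => lam * |⟪d, y⟫|) ((lam * s) • d) x := by
  refine hasSubgradientAt_of_inner_le (fun y => ?_) ?_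
  · have : s * ⟪d, y⟫ ≤ |⟪d, y⟫| :=
      calc s * ⟪d, y⟫ ≤ |s| * |⟪d, y⟫| := by rw [← abs_mul]; exact le_abs_self _
        _ ≤ |⟪d, y⟫| := mul_le_of_le_one_left (abs_nonneg _) hs
    rw [real_inner_smul_left, mul_assoc]
    exact mul_le_mul_of_nonneg_left this hlam
  · rw [real_inner_smul_left, mul_assoc, hx]

theorem hasSubgradientAt_const_mul_norm {gam : ℝ} {q x : E} (hq : ‖q‖ ≤ gam)
    (hx : ⟪q, x⟫ = gam * ‖x‖) :
    HasSubgradientAt (fun y => gam * ‖y‖) q x :=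
  hasSubgradientAt_of_inner_le (fun y => (real_inner_le_norm q y).trans <|
    mul_le_mul_of_nonneg_right hq (norm_nonneg y)) hx

/-- Group soft-thresholding: `z ↦ max (1 - γ / ‖z‖) 0 • z` is the proximal map of `γ‖·‖`. -/
theorem hasSubgradientAt_const_mul_norm_shrink {gam : ℝ} (hgam : 0 ≤ gam) (z : E) :
    HasSubgradientAt (fun y => gam * ‖y‖) (z - max (1 - gam / ‖z‖) 0 • z)
      (max (1 - gam / ‖z‖) 0 • z) := by
  set c := max (1 - gam / ‖z‖) 0
  have hc : 0 ≤ c := le_max_right _ _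
  have hc1 : c ≤ 1 := max_le (by linarith [div_nonneg hgam (norm_nonneg z)]) zero_le_one
  have hres : z - c • z = (1 - c) • z := by rw [sub_smul, one_smul]
  have key : (1 - c) * ‖z‖ ≤ gam ∧ c * ((1 - c) * ‖z‖ - gam) * ‖z‖ = 0 := by
    rcases eq_or_ne ‖z‖ 0 with hz | hz
    · simp [hz, hgam]
    rcases le_total (1 - gam / ‖z‖) 0 with h | h
    · have hc0 : c = 0 := max_eq_right h
      refine ⟨?_, by simp [hc0]⟩
      rw [hc0, sub_zero, one_mul]
      rwa [sub_nonpos, one_le_div (lt_of_le_of_ne (norm_nonneg z) hz.symm)] at h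
    · have hc' : c = 1 - gam / ‖z‖ := max_eq_left h
      have : (1 - c) * ‖z‖ = gam := by rw [hc']; field_simp; ring
      simp [this]
  rw [hres]
  refine hasSubgradientAt_const_mul_norm ?_ ?_
  · rw [norm_smul, Real.norm_of_nonneg (by linarith)]
    exact key.1
  · rw [real_inner_smul_left, real_inner_smul_right, real_inner_self_eq_norm_sq, norm_smul,
      Real.norm_of_nonneg hc]
    linear_combination key.2

theorem half_norm_sq_add_le_of_hasSubgradientAt {φ : E → ℝ} {ν x : E}
    (h : HasSubgradientAt φ (ν - x) x) (y : E) :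
    1 / 2 * ‖x - ν‖ ^ 2 + φ x + 1 / 2 * ‖y - x‖ ^ 2 ≤ 1 / 2 * ‖y - ν‖ ^ 2 + φ y := by
  have hsplit : ‖y - ν‖ ^ 2 = ‖x - ν‖ ^ 2 + 2 * ⟪x - ν, y - x⟫ + ‖y - x‖ ^ 2 := by
    rw [← norm_add_sq_real]; congr 2; abel
  have hneg : ⟪ν - x, y - x⟫ = -⟪x - ν, y - x⟫ := by rw [← inner_neg_left, neg_sub]
  linarith [h y]

theorem isUniqueMinimizer_of_hasSubgradientAt {φ : E → ℝ} {ν x : E}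
    (h : HasSubgradientAt φ (ν - x) x) :
    IsUniqueMinimizer (fun y => 1 / 2 * ‖y - ν‖ ^ 2 + φ y) x := by
  refine ⟨fun y => ?_, fun y hy => ?_⟩
  · linarith [half_norm_sq_add_le_of_hasSubgradientAt h y, sq_nonneg ‖y - x‖]
  · have := half_norm_sq_add_le_of_hasSubgradientAt h y
    have : ‖y - x‖ ^ 2 ≤ 0 := by linarith [hy x]
    rw [← sub_eq_zero, ← norm_eq_zero]
    exact pow_eq_zero_iff two_ne_zero |>.mp (le_antisymm this (sq_nonneg _))

/-- The proximal map of `lam * |⟪d, ·⟫|`: soft-thresholding of `ν` along `d`. -/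
noncomputable def absInnerProx (lam : ℝ) (d ν : E) : E :=
  if |⟪d, ν⟫| ≤ ‖d‖ ^ 2 * lam then ν - (⟪d, ν⟫ / ‖d‖ ^ 2) • d
  else if ⟪d, ν⟫ > ‖d‖ ^ 2 * lam then ν - lam • d
  else ν + lam • d

theorem exists_sign_absInnerProx (lam : ℝ) (d ν : E) :
    ∃ s : ℝ, |s| ≤ 1 ∧ s * ⟪d, absInnerProx lam d ν⟫ = |⟪d, absInnerProx lam d ν⟫| ∧
      ν - absInnerProx lam d ν = (lam * s) • d := by
  have hinner : ∀ a : ℝ, ⟪d, ν - a • d⟫ = ⟪d, ν⟫ - a * ‖d‖ ^ 2 := fun a => by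
    rw [inner_sub_right, real_inner_smul_right, real_inner_self_eq_norm_sq]
  unfold absInnerProx
  split_ifs with hsmall hpos
  · rcases eq_or_ne (‖d‖ ^ 2 * lam) 0 with h0 | h0
    · have ht : ⟪d, ν⟫ = 0 := abs_nonpos_iff.mp (h0 ▸ hsmall)
      exact ⟨0, by simp, by simp [ht], by simp [ht]⟩
    have hpos : 0 < ‖d‖ ^ 2 * lam := lt_of_le_of_ne ((abs_nonneg _).trans hsmall) h0.symm
    have hd : ‖d‖ ^ 2 ≠ 0 := left_ne_zero_of_mul h0
    refine ⟨⟪d, ν⟫ / (‖d‖ ^ 2 * lam), ?_, ?_, ?_⟩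
    · rwa [abs_div, abs_of_pos hpos, div_le_one hpos]
    · rw [hinner, div_mul_cancel₀ _ hd, sub_self, mul_zero, abs_zero]
    · rw [sub_sub_cancel]
      congr 1
      field_simp [right_ne_zero_of_mul h0]
  · refine ⟨1, by simp, ?_, by rw [sub_sub_cancel, mul_one]⟩
    rw [one_mul, eq_comm, abs_of_pos (by rw [hinner]; linarith)]
  · have hneg : ⟪d, ν⟫ < -(‖d‖ ^ 2 * lam) := by
      cases abs_cases ⟪d, ν⟫ <;> linarith
    refine ⟨-1, by simp, ?_, by rw [sub_add_cancel_left, mul_neg_one, neg_smul]⟩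
    rw [← sub_neg_eq_add, ← neg_smul, hinner, neg_one_mul, eq_comm, abs_of_neg (by linarith)]

theorem isUniqueMinimizer_shrink_absInnerProx {lam gam : ℝ} (hlam : 0 ≤ lam) (hgam : 0 ≤ gam)
    (d ν : E) :
    IsUniqueMinimizer (fun x => 1 / 2 * ‖x - ν‖ ^ 2 + lam * |⟪d, x⟫| + gam * ‖x‖)
      (max (1 - gam / ‖absInnerProx lam d ν‖) 0 • absInnerProx lam d ν) := by
  set p := absInnerProx lam d ν
  set c := max (1 - gam / ‖p‖) 0
  obtain ⟨s, hs, hsp, hres⟩ := exists_sign_absInnerProx lam d ν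
  have hc : 0 ≤ c := le_max_right _ _
  have habs : HasSubgradientAt (fun y => lam * |⟪d, y⟫|) ((lam * s) • d) (c • p) := by
    refine hasSubgradientAt_const_mul_abs_inner hlam hs ?_
    rw [real_inner_smul_right, abs_mul, abs_of_nonneg hc, ← hsp]
    ring
  have hsum : (lam * s) • d + (p - c • p) = ν - c • p := by rw [← hres]; abel
  have := isUniqueMinimizer_of_hasSubgradientAt
    (hsum ▸ habs.add (hasSubgradientAt_const_mul_norm_shrink hgam p))
  simpa only [add_assoc] using this

theorem isUniqueMinimizer_absInnerProx {lam : ℝ} (hlam : 0 ≤ lam) (d ν : E) :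
    IsUniqueMinimizer (fun x => 1 / 2 * ‖x - ν‖ ^ 2 + lam * |⟪d, x⟫|) (absInnerProx lam d ν) := by
  simpa using isUniqueMinimizer_shrink_absInnerProx hlam le_rfl d ν

end InnerProductSpace

theorem l2norm_eq_norm_toLp {ι : Type*} [Fintype ι] (v : ι → ℝ) :
    l2norm v = ‖WithLp.toLp 2 v‖ := by
  simp [l2norm, EuclideanSpace.norm_eq]

/-- The single column `d = (1, -1, -1, 1)ᵀ` of the log-odds constraint matrix. -/
noncomputable def logOddsVec : EuclideanSpace ℝ (Fin 4) := !₂[1, -1, -1, 1]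

theorem inner_logOddsVec (η : Fin 4 → ℝ) :
    ⟪logOddsVec, WithLp.toLp 2 η⟫ = η 0 - η 1 - η 2 + η 3 := by
  simp [logOddsVec, PiLp.inner_apply, Fin.sum_univ_four]
  ring

theorem norm_logOddsVec_sq : ‖logOddsVec‖ ^ 2 = 4 := by
  rw [← real_inner_self_eq_norm_sq]
  change ⟪logOddsVec, WithLp.toLp 2 ![1, -1, -1, 1]⟫ = 4
  rw [inner_logOddsVec]
  simp
  norm_num

theorem toLp_eq_absInnerProx_logOddsVec (ν : Fin 4 → ℝ) (lam : ℝ) :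
    WithLp.toLp 2 (if |ν 0 - ν 1 - ν 2 + ν 3| ≤ 4 * lam then
        ![ν 0 - (ν 0 - ν 1 - ν 2 + ν 3) / 4, ν 1 + (ν 0 - ν 1 - ν 2 + ν 3) / 4,
          ν 2 + (ν 0 - ν 1 - ν 2 + ν 3) / 4, ν 3 - (ν 0 - ν 1 - ν 2 + ν 3) / 4]
      else if ν 0 - ν 1 - ν 2 + ν 3 > 4 * lam then
        ![ν 0 - lam, ν 1 + lam, ν 2 + lam, ν 3 - lam]
      else
        ![ν 0 + lam, ν 1 - lam, ν 2 - lam, ν 3 + lam])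
      = absInnerProx lam logOddsVec (WithLp.toLp 2 ν) := by
  rw [absInnerProx, inner_logOddsVec, norm_logOddsVec_sq]
  split_ifs <;> ext i <;> fin_cases i <;> simp [logOddsVec] <;> ring

/-- Closed-form proximal solution in the bivariate binary case `J = K = 2`,
where the log-odds constraint matrix reduces to the single column
`d = (1,−1,−1,1)ᵀ`.  With `ν̈ = ν₁ − ν₂ − ν₃ + ν₄` and `η̂₀` defined piecewise,
`η̂ = max(1 − γ̄/‖η̂₀‖₂, 0)·η̂₀` is the unique global minimizer of
`f(η) = (1/2)‖η − ν‖₂² + λ̄|⟨d,η⟩| + γ̄‖η‖₂`; in particular (`γ̄ = 0`),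
`η̂₀` is the unique global minimizer of `g(η) = (1/2)‖η − ν‖₂² + λ̄|⟨d,η⟩|`. -/
theorem prox_binary_bivariate_solution
    (ν : Fin 4 → ℝ) (lamBar gamBar : ℝ) (hlam : 0 < lamBar) (hgam : 0 ≤ gamBar)
    (nudd : ℝ) (hnudd : nudd = ν 0 - ν 1 - ν 2 + ν 3)
    (f g : (Fin 4 → ℝ) → ℝ)
    (hf : ∀ η, f η = (1 / 2) * (l2norm (fun i => η i - ν i)) ^ 2
        + lamBar * |η 0 - η 1 - η 2 + η 3| + gamBar * l2norm η)
    (hg : ∀ η, g η = (1 / 2) * (l2norm (fun i => η i - ν i)) ^ 2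
        + lamBar * |η 0 - η 1 - η 2 + η 3|)
    (η₀ : Fin 4 → ℝ)
    (hη₀ : η₀ = if |nudd| ≤ 4 * lamBar then
        ![ν 0 - nudd / 4, ν 1 + nudd / 4, ν 2 + nudd / 4, ν 3 - nudd / 4]
      else if nudd > 4 * lamBar then
        ![ν 0 - lamBar, ν 1 + lamBar, ν 2 + lamBar, ν 3 - lamBar]
      else
        ![ν 0 + lamBar, ν 1 - lamBar, ν 2 - lamBar, ν 3 + lamBar])
    (ηhat : Fin 4 → ℝ)
    (hηhat : ηhat = max (1 - gamBar / l2norm η₀) 0 • η₀) :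
    ((∀ η, f ηhat ≤ f η) ∧ (∀ η, (∀ η', f η ≤ f η') → η = ηhat)) ∧
    ((∀ η, g η₀ ≤ g η) ∧ (∀ η, (∀ η', g η ≤ g η') → η = η₀)) := by
  set p := absInnerProx lamBar logOddsVec (WithLp.toLp 2 ν)
  have h₀ : WithLp.toLp 2 η₀ = p := by
    rw [hη₀, hnudd]; exact toLp_eq_absInnerProx_logOddsVec ν lamBar
  have hhat : WithLp.toLp 2 ηhat = max (1 - gamBar / ‖p‖) 0 • p := by
    rw [hηhat, WithLp.toLp_smul, h₀, l2norm_eq_norm_toLp, h₀]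
  have hf' : f = (fun x => 1 / 2 * ‖x - WithLp.toLp 2 ν‖ ^ 2 + lamBar * |⟪logOddsVec, x⟫|
      + gamBar * ‖x‖) ∘ WithLp.toLp 2 := by
    funext η
    rw [hf, Function.comp_apply, inner_logOddsVec, l2norm_eq_norm_toLp, l2norm_eq_norm_toLp]
    rfl
  have hg' : g = (fun x => 1 / 2 * ‖x - WithLp.toLp 2 ν‖ ^ 2 + lamBar * |⟪logOddsVec, x⟫|)
      ∘ WithLp.toLp 2 := by
    funext η
    rw [hg, Function.comp_apply, inner_logOddsVec, l2norm_eq_norm_toLp]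
    rfl
  refine ⟨show IsUniqueMinimizer f ηhat from ?_, show IsUniqueMinimizer g η₀ from ?_⟩
  · rw [hf']
    refine IsUniqueMinimizer.comp_equiv (WithLp.equiv 2 (Fin 4 → ℝ)).symm ?_
    rw [WithLp.equiv_symm_apply, hhat]
    exact isUniqueMinimizer_shrink_absInnerProx hlam.le hgam _ _
  · rw [hg']
    refine IsUniqueMinimizer.comp_equiv (WithLp.equiv 2 (Fin 4 → ℝ)).symm ?_
    rw [WithLp.equiv_symm_apply, h₀]
    exact isUniqueMinimizer_absInnerProx hlam.le _ _
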